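/- arXiv:2405.03856 — 2 statements merged into one kernel-verified Lean document; each statement's English description precedes it below -/
import Mathlib

section
/- Let G be a bridgeless cubic multigraph and e any edge of G. Then G has a perfect matching that does not contain e. -/
/-- A multigraph on vertex type `V` with edge type `E`: each edge has an
unordered pair of endpoints (loops and parallel edges are allowed). -/
structure Multigraph (V : Type) (E : Type) where
  ends : E → Sym2 V

namespace Multigraph

variable {V E : Type} (G : Multigraph V E)

/-- A single step along an edge of the edge set `ES`. -/
def Step (ES : Set E) (x y : V) : Prop := ∃ e ∈ ES, G.ends e = s(x, y)

/-- `x` and `y` are joined by a walk using only edges of `ES`. -/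
def LinkedOn (ES : Set E) (x y : V) : Prop := Relation.ReflTransGen (G.Step ES) x y

/-- All edges of `ES` have both endpoints in `VS`. -/
def EdgesWithin (VS : Set V) (ES : Set E) : Prop := ∀ e ∈ ES, ∀ x ∈ G.ends e, x ∈ VS

/-- The subgraph with vertex set `VS` and edge set `ES` is connected. -/
def ConnectedOn (VS : Set V) (ES : Set E) : Prop :=
  G.EdgesWithin VS ES ∧ ∀ x ∈ VS, ∀ y ∈ VS, G.LinkedOn ES x y

/-- The degree of `v` in the edge set `ES`; a loop at `v` counts twice. -/
noncomputable def degOn (ES : Set E) (v : V) : ℕ :=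
  {e ∈ ES | v ∈ G.ends e}.ncard + {e ∈ ES | G.ends e = s(v, v)}.ncard

/-- The subgraph `(VS, ES)` is cubic: every vertex has degree exactly `3`. -/
def CubicOn (VS : Set V) (ES : Set E) : Prop :=
  G.EdgesWithin VS ES ∧ ∀ v ∈ VS, G.degOn ES v = 3

/-- `f` is a bridge of the subgraph `(VS, ES)`: removing it disconnects two
vertices of `VS` that were connected. -/
def IsBridgeOn (VS : Set V) (ES : Set E) (f : E) : Prop :=
  f ∈ ES ∧ ∃ x ∈ VS, ∃ y ∈ VS, G.LinkedOn ES x y ∧ ¬ G.LinkedOn (ES \ {f}) x y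

/-- The subgraph `(VS, ES)` has no bridge. -/
def BridgelessOn (VS : Set V) (ES : Set E) : Prop := ∀ f, ¬ G.IsBridgeOn VS ES f

/-- `M` is a perfect matching of the subgraph `(VS, ES)`: a set of non-loop
edges such that every vertex of `VS` is incident to exactly one edge of `M`. -/
def IsPerfectMatchingOn (VS : Set V) (ES : Set E) (M : Set E) : Prop :=
  M ⊆ ES ∧ (∀ e ∈ M, ¬ (G.ends e).IsDiag) ∧ ∀ v ∈ VS, ∃! e, e ∈ M ∧ v ∈ G.ends e

/-- `T` is a spanning tree of the subgraph `(VS, ES)`: it is a connected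
spanning subgraph in which every edge is essential (i.e. it is acyclic). -/
def IsSpanningTreeOn (VS : Set V) (ES : Set E) (T : Set E) : Prop :=
  T ⊆ ES ∧ G.ConnectedOn VS T ∧ ∀ f ∈ T, ¬ G.ConnectedOn VS (T \ {f})

/-- The non-tree edge `e` covers the tree edge `f` of the spanning tree `T`:
`f` lies on the path in `T` connecting the endpoints of `e`, i.e. the
endpoints of `e` get disconnected in `T` after removing `f`. -/
def Covers (T : Set E) (e f : E) : Prop :=
  f ∈ T ∧ e ∉ T ∧ ∃ x y, G.ends e = s(x, y) ∧ ¬ G.LinkedOn (T \ {f}) x y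

/-- `A` is an `M`-alternating cycle: a nonempty connected set of non-loop
edges in which every vertex incident to `A` is incident to exactly one edge
of `A ∩ M` and exactly one edge of `A \ M`. -/
def IsAlternatingCycle (M A : Set E) : Prop :=
  A.Nonempty ∧
  (∀ e ∈ A, ¬ (G.ends e).IsDiag) ∧
  (∀ v, (∃ e ∈ A, v ∈ G.ends e) →
    (∃! e, e ∈ A ∩ M ∧ v ∈ G.ends e) ∧ (∃! e, e ∈ A \ M ∧ v ∈ G.ends e)) ∧
  (∀ x y, (∃ e ∈ A, x ∈ G.ends e) → (∃ e ∈ A, y ∈ G.ends e) → G.LinkedOn A x y)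

end Multigraph

/-!
Petersen's argument. Delete `e`, drop loops and merge parallel edges; by Tutte's theorem the
resulting simple graph has a perfect matching as soon as, for every vertex set `S`, at most
`|S|` components of its restriction to the complement of `S` are odd. An odd component `C`
is left by an odd number of edges, since the degrees in `C` add up to `3 |C|`; as no edge is
a bridge, that number is at least `3`. Every such edge other than `e` ends in `S`, and at
most two components are left by `e`, so `3 q - 2 ≤ 3 |S|` for `q` odd components, whence
`q ≤ |S|`.
-/

namespace SimpleGraph

variable {V : Type} {H : SimpleGraph V} {S : Set V}

lemma disjoint_image_val_supp (c : ((⊤ : H.Subgraph).deleteVerts S).coe.ConnectedComponent) :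
    Disjoint (Subtype.val '' c.supp) S := by
  rw [Set.disjoint_left]
  rintro _ ⟨x, -, rfl⟩
  exact x.2.2

lemma mem_image_val_supp_of_adj (c : ((⊤ : H.Subgraph).deleteVerts S).coe.ConnectedComponent)
    {a b : V} (ha : a ∈ Subtype.val '' c.supp) (hb : b ∉ S) (hab : H.Adj a b) :
    b ∈ Subtype.val '' c.supp := by
  obtain ⟨x, hx, rfl⟩ := ha
  refine ⟨⟨b, trivial, hb⟩, c.mem_supp_of_adj_mem_supp hx ?_, rfl⟩
  simpa [Subgraph.deleteVerts_adj] using ⟨x.2.2, hb, hab⟩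

end SimpleGraph

namespace Multigraph

variable {V E : Type} {G : Multigraph V E}

variable (G) in
def edgeBoundary (C : Set V) : Set E := {f | ∃ a b, G.ends f = s(a, b) ∧ a ∈ C ∧ b ∉ C}

lemma mem_edgeBoundary_iff {C : Set V} {f : E} {a b : V} (h : G.ends f = s(a, b)) :
    f ∈ G.edgeBoundary C ↔ (a ∈ C ∧ b ∉ C) ∨ (b ∈ C ∧ a ∉ C) := by
  simp only [edgeBoundary, Set.mem_ofPred_eq, h, Sym2.eq_iff]
  constructor
  · rintro ⟨x, y, (⟨rfl, rfl⟩ | ⟨rfl, rfl⟩), hx, hy⟩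
    exacts [Or.inl ⟨hx, hy⟩, Or.inr ⟨hx, hy⟩]
  · rintro (⟨ha, hb⟩ | ⟨hb, ha⟩)
    exacts [⟨a, b, Or.inl ⟨rfl, rfl⟩, ha, hb⟩, ⟨b, a, Or.inr ⟨rfl, rfl⟩, hb, ha⟩]

variable (G) in
lemma sum_degOn_univ [Fintype E] (C : Finset V) :
    ∑ v ∈ C, G.degOn Set.univ v =
      (G.edgeBoundary C).ncard + 2 * {f | ∀ x ∈ G.ends f, x ∈ C}.ncard := by
  classical
  have hdeg (v : V) : G.degOn Set.univ v =
      ∑ f, ((if v ∈ G.ends f then 1 else 0) + if G.ends f = s(v, v) then 1 else 0) := by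
    simp only [degOn, Set.sep_univ, Set.ncard_eq_toFinset_card', Set.toFinset_ofPred,
      Finset.card_filter, Finset.sum_add_distrib]
  -- a loop at `v` is counted twice, exactly as by the two endpoints of `s(a, b)`
  have hloop (a b v : V) : ((if v ∈ s(a, b) then 1 else 0) +
      if s(a, b) = s(v, v) then 1 else 0 : ℕ) =
      (if v = a then 1 else 0) + if v = b then 1 else 0 := by
    rcases eq_or_ne v a with rfl | ha <;> rcases eq_or_ne v b with rfl | hb <;>
      simp [*, Ne.symm]
  have hedge (f : E) : ∑ v ∈ C, ((if v ∈ G.ends f then 1 else 0) +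
      if G.ends f = s(v, v) then 1 else 0) =
      (if f ∈ G.edgeBoundary C then 1 else 0) +
        2 * if ∀ x ∈ G.ends f, x ∈ C then 1 else 0 := by
    induction hf : G.ends f using Sym2.ind with | h a b => ?_
    simp only [hloop, Finset.sum_add_distrib, Finset.sum_ite_eq', mem_edgeBoundary_iff hf,
      Sym2.forall_mem_pair, Finset.mem_coe]
    by_cases ha : a ∈ C <;> by_cases hb : b ∈ C <;> simp [ha, hb]
  simp only [hdeg]
  rw [Finset.sum_comm, Finset.sum_congr rfl (fun f _ => hedge f), Finset.sum_add_distrib,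
    ← Finset.mul_sum]
  simp only [Finset.sum_boole, Nat.cast_id, Set.ncard_eq_toFinset_card', Set.toFinset_ofPred,
    Set.filter_mem_univ_eq_toFinset]

lemma LinkedOn.mem_of_disjoint_edgeBoundary {ES : Set E} {C : Set V} {x y : V}
    (h : G.LinkedOn ES x y) (hES : Disjoint ES (G.edgeBoundary C)) (hx : x ∈ C) : y ∈ C := by
  induction h with
  | refl => exact hx
  | tail _ hstep ih =>
    obtain ⟨f, hf, hends⟩ := hstep
    by_contra hy
    exact Set.disjoint_left.mp hES hf ⟨_, _, hends, ih, hy⟩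

lemma isBridgeOn_of_edgeBoundary_eq_singleton {C : Set V} {f : E}
    (h : G.edgeBoundary C = {f}) : G.IsBridgeOn Set.univ Set.univ f := by
  obtain ⟨a, b, hab, ha, hb⟩ : f ∈ G.edgeBoundary C := h ▸ rfl
  refine ⟨trivial, a, trivial, b, trivial, .single ⟨f, trivial, hab⟩, fun hlink => hb ?_⟩
  exact hlink.mem_of_disjoint_edgeBoundary (h ▸ Set.disjoint_sdiff_left) ha

lemma three_le_ncard_edgeBoundary [Fintype V] [Fintype E]
    (hcubic : ∀ v, G.degOn Set.univ v = 3) (hbridgeless : G.BridgelessOn Set.univ Set.univ)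
    {C : Set V} (hC : Odd C.ncard) : 3 ≤ (G.edgeBoundary C).ncard := by
  classical
  have hsum := G.sum_degOn_univ C.toFinset
  simp only [hcubic, Finset.sum_const, smul_eq_mul, Set.coe_toFinset,
    ← Set.ncard_eq_toFinset_card'] at hsum
  have hne : (G.edgeBoundary C).ncard ≠ 1 := fun h1 =>
    let ⟨f, hf⟩ := Set.ncard_eq_one.mp h1
    hbridgeless f (isBridgeOn_of_edgeBoundary_eq_singleton hf)
  obtain ⟨k, hk⟩ := hC
  omega

lemma ncard_incident_le [Finite V] [Finite E] {k : ℕ} (hdeg : ∀ v, G.degOn Set.univ v ≤ k)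
    (S : Set V) :
    {f | ∃ u ∈ G.ends f, u ∈ S}.ncard ≤ k * S.ncard := by
  classical
  have : Fintype V := Fintype.ofFinite V
  have hsub : {f | ∃ u ∈ G.ends f, u ∈ S} ⊆ ⋃ u ∈ S.toFinset, {f | u ∈ G.ends f} := by
    rintro f ⟨u, hu, huS⟩
    exact Set.mem_biUnion (Set.mem_toFinset.mpr huS) hu
  have hu (u : V) : {f | u ∈ G.ends f}.ncard ≤ k := by
    have := hdeg u
    rw [degOn, Set.sep_univ] at this
    omega
  calc {f | ∃ u ∈ G.ends f, u ∈ S}.ncard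
      ≤ (⋃ u ∈ S.toFinset, {f | u ∈ G.ends f}).ncard :=
        Set.ncard_le_ncard hsub (Set.toFinite _)
    _ ≤ ∑ u ∈ S.toFinset, {f | u ∈ G.ends f}.ncard := Finset.set_ncard_biUnion_le _ _
    _ ≤ ∑ u ∈ S.toFinset, k := Finset.sum_le_sum fun u _ => hu u
    _ = k * S.ncard := by rw [Finset.sum_const, smul_eq_mul, Set.ncard_eq_toFinset_card', mul_comm]

variable (G) in
open Classical in
lemma card_filter_mem_edgeBoundary_le_two {ι : Type*} (t : Finset ι) {C : ι → Set V}
    (hdisj : (t : Set ι).PairwiseDisjoint C) (f : E) :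
    (t.filter fun i => f ∈ G.edgeBoundary (C i)).card ≤ 2 := by
  induction hf : G.ends f using Sym2.ind with | h a b => ?_
  have hone (x : V) : (t.filter fun i => x ∈ C i).card ≤ 1 := by
    refine Finset.card_le_one.mpr fun i hi j hj => ?_
    rw [Finset.mem_filter] at hi hj
    exact hdisj.elim hi.1 hj.1 (Set.not_disjoint_iff.mpr ⟨x, hi.2, hj.2⟩)
  calc (t.filter fun i => f ∈ G.edgeBoundary (C i)).card
      ≤ ((t.filter fun i => a ∈ C i) ∪ t.filter fun i => b ∈ C i).card := by
        refine Finset.card_le_card fun i hi => ?_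
        simp only [Finset.mem_filter, Finset.mem_union, mem_edgeBoundary_iff hf] at hi ⊢
        tauto
    _ ≤ 2 := (Finset.card_union_le _ _).trans (by linarith [hone a, hone b])

lemma pairwiseDisjoint_edgeBoundary_diff {ι : Type*} {t : Set ι} {C : ι → Set V} {S : Set V}
    {e : E} (hdisj : t.PairwiseDisjoint C) (hS : ∀ i ∈ t, Disjoint (C i) S)
    (hbdry : ∀ i ∈ t, ∀ f ∈ G.edgeBoundary (C i) \ {e}, ∃ u ∈ G.ends f, u ∈ S) :
    t.PairwiseDisjoint fun i => G.edgeBoundary (C i) \ {e} := by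
  intro i hi j hj hij
  refine Set.disjoint_left.mpr fun f hfi hfj => ?_
  obtain ⟨a, b, hab, ha, -⟩ := hfi.1
  obtain ⟨u, hu, huS⟩ := hbdry i hi f hfi
  have hbS : b ∈ S := by
    rcases Sym2.mem_iff.mp (hab ▸ hu) with rfl | rfl
    · exact absurd huS (Set.disjoint_left.mp (hS i hi) ha)
    · exact huS
  rcases (mem_edgeBoundary_iff hab).mp hfj.1 with ⟨haj, -⟩ | ⟨hbj, -⟩
  · exact Set.disjoint_left.mp (hdisj hi hj hij) ha haj
  · exact Set.disjoint_left.mp (hS j hj) hbj hbS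

open Classical in
lemma card_le_ncard_of_pairwiseDisjoint_odd [Fintype V] [Fintype E]
    (hcubic : ∀ v, G.degOn Set.univ v = 3) (hbridgeless : G.BridgelessOn Set.univ Set.univ)
    {ι : Type*} (t : Finset ι) {C : ι → Set V} {S : Set V} (e : E)
    (hdisj : (t : Set ι).PairwiseDisjoint C) (hodd : ∀ i ∈ t, Odd (C i).ncard)
    (hS : ∀ i ∈ t, Disjoint (C i) S)
    (hbdry : ∀ i ∈ t, ∀ f ∈ G.edgeBoundary (C i) \ {e}, ∃ u ∈ G.ends f, u ∈ S) :
    t.card ≤ S.ncard := by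
  have h3 (i) (hi : i ∈ t) : 3 ≤ (G.edgeBoundary (C i) \ {e}).ncard +
      if e ∈ G.edgeBoundary (C i) then 1 else 0 := by
    have := three_le_ncard_edgeBoundary hcubic hbridgeless (hodd i hi)
    split_ifs with he
    · rw [Set.ncard_sdiff_singleton_of_mem he]; omega
    · rw [Set.sdiff_singleton_eq_self he]; omega
  have hB : ∑ i ∈ t, (G.edgeBoundary (C i) \ {e}).ncard ≤ 3 * S.ncard := by
    rw [← finsum_mem_coe_finset, ← t.finite_toSet.ncard_biUnion (fun _ _ => Set.toFinite _)
      (pairwiseDisjoint_edgeBoundary_diff hdisj hS hbdry)]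
    refine (Set.ncard_le_ncard ?_ (Set.toFinite _)).trans
      (ncard_incident_le (fun v => (hcubic v).le) S)
    exact Set.iUnion₂_subset fun i hi f hf => hbdry i hi f hf
  have he := G.card_filter_mem_edgeBoundary_le_two t hdisj e
  have : 3 * t.card ≤ 3 * S.ncard + 2 :=
    calc 3 * t.card = ∑ i ∈ t, 3 := by rw [Finset.sum_const, smul_eq_mul, mul_comm]
      _ ≤ ∑ i ∈ t, ((G.edgeBoundary (C i) \ {e}).ncard +
          if e ∈ G.edgeBoundary (C i) then 1 else 0) := Finset.sum_le_sum h3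
      _ ≤ 3 * S.ncard + 2 := by
        rw [Finset.sum_add_distrib, Finset.sum_boole, Nat.cast_id]
        omega
  omega

lemma step_symm {ES : Set E} {x y : V} (h : G.Step ES x y) : G.Step ES y x :=
  let ⟨f, hf, hends⟩ := h
  ⟨f, hf, hends.trans Sym2.eq_swap⟩

variable (G) in
def simpleGraphOn (F : Set E) : SimpleGraph V where
  Adj x y := x ≠ y ∧ G.Step F x y
  symm := ⟨fun _ _ h => ⟨h.1.symm, step_symm h.2⟩⟩
  loopless := ⟨fun _ h => h.1 rfl⟩

lemma exists_isPerfectMatchingOn_of_isPerfectMatching {F : Set E}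
    {M : (G.simpleGraphOn F).Subgraph} (hM : M.IsPerfectMatching) :
    ∃ M' ⊆ F, G.IsPerfectMatchingOn Set.univ Set.univ M' := by
  have hlift (z : M.edgeSet) : ∃ f ∈ F, G.ends f = z := by
    obtain ⟨z, hz⟩ := z
    induction z using Sym2.ind with | h x y => exact (M.adj_sub hz).2
  choose pick hpickF hpick using hlift
  refine ⟨Set.range pick, Set.range_subset_iff.mpr hpickF, Set.subset_univ _, ?_, fun v _ => ?_⟩
  · rintro _ ⟨z, rfl⟩
    rw [hpick]
    exact SimpleGraph.not_isDiag_of_mem_edgeSet _ (M.edgeSet_subset z.2)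
  · obtain ⟨w, hvw, huniq⟩ := SimpleGraph.Subgraph.isPerfectMatching_iff.mp hM v
    refine ⟨pick ⟨s(v, w), hvw⟩, ⟨⟨_, rfl⟩, hpick _ ▸ Sym2.mem_mk_left v w⟩, ?_⟩
    rintro _ ⟨⟨z, rfl⟩, hv⟩
    rw [hpick] at hv
    obtain ⟨y, hy⟩ := Sym2.mem_iff_exists.mp hv
    have hyw : y = w := huniq y (SimpleGraph.Subgraph.mem_edgeSet.mp (hy ▸ z.2))
    congr
    exact Subtype.ext (hy.trans (hyw ▸ rfl))

lemma not_isTutteViolator_simpleGraphOn [Fintype V] [Fintype E]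
    (hcubic : ∀ v, G.degOn Set.univ v = 3) (hbridgeless : G.BridgelessOn Set.univ Set.univ)
    (e : E) (S : Set V) : ¬ (G.simpleGraphOn (Set.univ \ {e})).IsTutteViolator S := by
  classical
  rw [SimpleGraph.IsTutteViolator, not_lt, Set.ncard_eq_toFinset_card']
  refine card_le_ncard_of_pairwiseDisjoint_odd hcubic hbridgeless _
    (C := fun c => Subtype.val '' c.supp) e ?_ ?_
    (fun c _ => SimpleGraph.disjoint_image_val_supp c) ?_
  · intro c _ d _ hcd
    exact (Set.disjoint_image_iff Subtype.val_injective).mpr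
      (SimpleGraph.pairwise_disjoint_supp_connectedComponent _ hcd)
  · intro c hc
    rw [Set.ncard_image_of_injective _ Subtype.val_injective]
    simpa using hc
  · rintro c - f ⟨⟨a, b, hab, ha, hb⟩, hfe⟩
    refine ⟨b, hab ▸ Sym2.mem_mk_right a b, by_contra fun hbS => hb ?_⟩
    refine SimpleGraph.mem_image_val_supp_of_adj c ha hbS ⟨?_, f, ⟨trivial, hfe⟩, hab⟩
    rintro rfl
    exact hb ha

end Multigraph

/-- Let `G` be a bridgeless cubic multigraph and `e` any edge of `G`. Then `G`
has a perfect matching that does not contain `e`. -/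
theorem exists_perfect_matching_avoiding {V E : Type} [Fintype V] [Fintype E]
    (G : Multigraph V E)
    (hcubic : G.CubicOn Set.univ Set.univ)
    (hbridgeless : G.BridgelessOn Set.univ Set.univ) (e : E) :
    ∃ M : Set E, G.IsPerfectMatchingOn Set.univ Set.univ M ∧ e ∉ M := by
  obtain ⟨M, hM⟩ := SimpleGraph.tutte.mpr
    (G.not_isTutteViolator_simpleGraphOn (fun v => hcubic.2 v trivial) hbridgeless e)
  obtain ⟨M', hM'e, hM'⟩ := G.exists_isPerfectMatchingOn_of_isPerfectMatching hM
  exact ⟨M', hM', fun he => (hM'e he).2 rfl⟩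
end

section
/- Let G be a cubic multigraph containing a double edge between v and w (two parallel edges f1, f2), with remaining incident edges {a,v} and {b,w} where a ≠ w and b ≠ v. Let H be obtained from G by deleting v and w (and all four incident edges) and adding an edge {a,b}. If M' is a perfect matching of H with {a,b} ∉ M', then M = M' ∪ {f1} is a perfect matching of G. Moreover, if G is bridgeless then so is H. -/
/-!
Since `v` and `w` have degree 3, `f1`, `f2`, `eav`, `ebw` are the only edges at `v` and `w`.
Hence a perfect matching of `H` avoiding `ab` uses no edge at `v` or `w`, and `f1` covers both.

For bridgelessness, a walk of `H` gives one of `G` (replace `ab` by `a v w b`). If `f` separated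
`x` and `y` in `H`, then `x` and `y` would still be joined in `G` minus `g`, where `g = f` for an
old edge and `g = eav` for `f = ab`. Projecting that walk back to `H` by sending `v ↦ a`, `w ↦ b`
(respectively `v, w ↦ b`) turns the double edge into `ab` (respectively into a point) and yields a
walk of `H` avoiding `f`.
-/

open Set Function

namespace Multigraph

variable {V E E' : Type} {G : Multigraph V E}

section Linked

variable {S : Set E} {x y : V}

theorem LinkedOn.of_eq (h : x = y) : G.LinkedOn S x y :=
  h ▸ Relation.ReflTransGen.refl

theorem LinkedOn.single {e : E} (he : e ∈ S) (hends : G.ends e = s(x, y)) : G.LinkedOn S x y :=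
  Relation.ReflTransGen.single ⟨e, he, hends⟩

instance (S : Set E) : Std.Symm (G.Step S) where
  symm _ _ := by
    rintro ⟨e, he, hends⟩
    exact ⟨e, he, hends.trans Sym2.eq_swap⟩

theorem LinkedOn.symm (h : G.LinkedOn S x y) : G.LinkedOn S y x :=
  Relation.ReflTransGen.stdSymm.symm x y h

theorem LinkedOn.of_mk_eq_mk (π : V → V) {p q : V} (h : G.LinkedOn S (π x) (π y))
    (hpq : s(p, q) = s(x, y)) : G.LinkedOn S (π p) (π q) := by
  rcases Sym2.eq_iff.mp hpq with ⟨rfl, rfl⟩ | ⟨rfl, rfl⟩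
  exacts [h, h.symm]

theorem LinkedOn.map {G' : Multigraph V E'} {S' : Set E'} (π : V → V)
    (hπ : ∀ e ∈ S, ∀ p q, G.ends e = s(p, q) → G'.LinkedOn S' (π p) (π q))
    (h : G.LinkedOn S x y) : G'.LinkedOn S' (π x) (π y) :=
  Relation.ReflTransGen.lift' π (fun p q ⟨e, he, hends⟩ => hπ e he p q hends) x y h

theorem BridgelessOn.linkedOn_diff {VS : Set V} (hG : G.BridgelessOn VS S) (hx : x ∈ VS)
    (hy : y ∈ VS) (h : G.LinkedOn S x y) (g : E) : G.LinkedOn (S \ {g}) x y := by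
  by_cases hg : g ∈ S
  · by_contra h'
    exact hG g ⟨hg, x, hx, y, hy, h, h'⟩
  · rwa [sdiff_singleton_eq_self hg]

end Linked

theorem incident_eq_and_no_loop_of_degOn_eq_three [Finite E] {u : V} {e₁ e₂ e₃ : E}
    (h₁₂ : e₁ ≠ e₂) (h₁₃ : e₁ ≠ e₃) (h₂₃ : e₂ ≠ e₃)
    (h₁ : u ∈ G.ends e₁) (h₂ : u ∈ G.ends e₂) (h₃ : u ∈ G.ends e₃)
    (hdeg : G.degOn univ u = 3) :
    {e | u ∈ G.ends e} = {e₁, e₂, e₃} ∧ ∀ e, G.ends e ≠ s(u, u) := by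
  have hsub : {e₁, e₂, e₃} ⊆ {e | u ∈ G.ends e} := by
    rintro e (rfl | rfl | rfl) <;> assumption
  have hthree : ({e₁, e₂, e₃} : Set E).ncard = 3 :=
    ncard_eq_three.mpr ⟨_, _, _, h₁₂, h₁₃, h₂₃, rfl⟩
  have hle := ncard_le_ncard hsub
  simp only [degOn, mem_univ, true_and] at hdeg
  refine ⟨(eq_of_subset_of_ncard_le hsub (by omega)).symm, fun e he => ?_⟩
  have hloops : {e | G.ends e = s(u, u)}.ncard = 0 := by omega
  exact ((ncard_eq_zero).mp hloops).subset he

theorem IsPerfectMatchingOn.preimage {G' : Multigraph V E'} {φ : E → E'} (hφ : Injective φ)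
    (hends : ∀ e, G'.ends (φ e) = G.ends e) {VS : Set V} {ES M : Set E'}
    (hM : G'.IsPerfectMatchingOn VS ES M) (hMφ : M ⊆ range φ) :
    G.IsPerfectMatchingOn VS (φ ⁻¹' ES) (φ ⁻¹' M) := by
  obtain ⟨hMES, hloop, hunique⟩ := hM
  refine ⟨preimage_mono hMES, fun e he => hends e ▸ hloop _ he, fun u hu => ?_⟩
  obtain ⟨_, ⟨he, hue⟩, huniq⟩ := hunique u hu
  obtain ⟨e, rfl⟩ := hMφ he
  refine ⟨e, ⟨he, hends e ▸ hue⟩, fun e' ⟨he', hue'⟩ => hφ ?_⟩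
  exact huniq _ ⟨he', (hends e').symm ▸ hue'⟩

theorem IsPerfectMatchingOn.union_singleton {ES M : Set E} {v w : V} {f : E}
    (hM : G.IsPerfectMatchingOn {x | x ≠ v ∧ x ≠ w} ES M)
    (hMvw : ∀ e ∈ M, v ∉ G.ends e ∧ w ∉ G.ends e) (hf : G.ends f = s(v, w)) (hvw : v ≠ w) :
    G.IsPerfectMatchingOn univ univ (M ∪ {f}) := by
  obtain ⟨-, hloop, hunique⟩ := hM
  refine ⟨subset_univ _, ?_, fun u _ => ?_⟩
  · rintro e (he | rfl)
    exacts [hloop e he, hf ▸ Sym2.mk_isDiag_iff.not.mpr hvw]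
  by_cases hu : u = v ∨ u = w
  · refine ⟨f, ⟨Or.inr rfl, by rcases hu with rfl | rfl <;> simp [hf]⟩, ?_⟩
    rintro e ⟨he | rfl, hue⟩
    · rcases hu with rfl | rfl
      exacts [((hMvw e he).1 hue).elim, ((hMvw e he).2 hue).elim]
    · rfl
  · rw [not_or] at hu
    obtain ⟨e, ⟨he, hue⟩, huniq⟩ := hunique u hu
    refine ⟨e, ⟨Or.inl he, hue⟩, ?_⟩
    rintro e' ⟨he' | rfl, hue'⟩
    · exact huniq e' ⟨he', hue'⟩
    · rw [hf, Sym2.mem_iff] at hue'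
      exact (hue'.elim hu.1 hu.2).elim

def addEdge (G : Multigraph V E) (a b : V) : Multigraph V (E ⊕ Unit) :=
  ⟨Sum.elim G.ends fun _ => s(a, b)⟩

theorem linkedOn_univ_of_addEdge {a b x y : V} {T : Set (E ⊕ Unit)}
    (hab : G.LinkedOn univ a b) (h : (G.addEdge a b).LinkedOn T x y) :
    G.LinkedOn univ x y := by
  refine h.map id fun e _ p q hends => ?_
  cases e with
  | inl e => exact .single (mem_univ e) hends
  | inr => exact hab.of_mk_eq_mk id hends.symm

def keptEdges (K : Set E) : Set (E ⊕ Unit) := Sum.inl '' Kᶜ ∪ range Sum.inr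

@[simp]
theorem inl_mem_keptEdges {K : Set E} {e : E} : Sum.inl e ∈ keptEdges K ↔ e ∉ K := by
  simp [keptEdges]

@[simp]
theorem inr_mem_keptEdges {K : Set E} (u : Unit) : Sum.inr u ∈ keptEdges K := by
  simp [keptEdges]

structure IsDoubleEdge (G : Multigraph V E) (v w a b : V) (f₁ f₂ eav ebw : E) : Prop where
  ne : v ≠ w
  ends_f₁ : G.ends f₁ = s(v, w)
  ends_f₂ : G.ends f₂ = s(v, w)
  ends_eav : G.ends eav = s(a, v)
  ends_ebw : G.ends ebw = s(b, w)
  a_ne_v : a ≠ v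
  a_ne_w : a ≠ w
  b_ne_v : b ≠ v
  b_ne_w : b ≠ w
  mem_of_incident : ∀ e, v ∈ G.ends e ∨ w ∈ G.ends e → e ∈ ({f₁, f₂, eav, ebw} : Set E)

theorem isDoubleEdge_of_degOn_eq_three [Finite E] {v w a b : V} {f₁ f₂ eav ebw : E}
    (hv : G.degOn univ v = 3) (hw : G.degOn univ w = 3) (hvw : v ≠ w) (hf₁₂ : f₁ ≠ f₂)
    (hf₁ : G.ends f₁ = s(v, w)) (hf₂ : G.ends f₂ = s(v, w))
    (heav : G.ends eav = s(a, v)) (hebw : G.ends ebw = s(b, w)) (haw : a ≠ w) (hbv : b ≠ v) :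
    G.IsDoubleEdge v w a b f₁ f₂ eav ebw := by
  have ne_of_ends {e e' : E} (h : G.ends e ≠ G.ends e') : e ≠ e' := fun h' => h (h' ▸ rfl)
  have hvw_av : s(v, w) ≠ s(a, v) := by simp [hvw.symm, haw.symm]
  have hvw_bw : s(v, w) ≠ s(b, w) := by simp [hvw, hbv.symm]
  obtain ⟨hv_inc, hv_loop⟩ := incident_eq_and_no_loop_of_degOn_eq_three hf₁₂
    (ne_of_ends (hf₁ ▸ heav ▸ hvw_av)) (ne_of_ends (hf₂ ▸ heav ▸ hvw_av))
    (by simp [hf₁]) (by simp [hf₂]) (by simp [heav]) hv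
  obtain ⟨hw_inc, hw_loop⟩ := incident_eq_and_no_loop_of_degOn_eq_three hf₁₂
    (ne_of_ends (hf₁ ▸ hebw ▸ hvw_bw)) (ne_of_ends (hf₂ ▸ hebw ▸ hvw_bw))
    (by simp [hf₁]) (by simp [hf₂]) (by simp [hebw]) hw
  refine ⟨hvw, hf₁, hf₂, heav, hebw, fun h => hv_loop eav (h ▸ heav), haw, hbv,
    fun h => hw_loop ebw (h ▸ hebw), fun e he => ?_⟩
  rcases he with he | he
  · have : e ∈ ({f₁, f₂, eav} : Set E) := hv_inc ▸ he
    aesop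
  · have : e ∈ ({f₁, f₂, ebw} : Set E) := hw_inc ▸ he
    aesop

namespace IsDoubleEdge

variable {v w a b : V} {f₁ f₂ eav ebw : E} (hD : G.IsDoubleEdge v w a b f₁ f₂ eav ebw)
include hD

theorem not_mem_ends {e : E} (he : e ∉ ({f₁, f₂, eav, ebw} : Set E)) :
    v ∉ G.ends e ∧ w ∉ G.ends e :=
  not_or.mp fun h => he (hD.mem_of_incident e h)

theorem isPerfectMatchingOn_union {M : Set (E ⊕ Unit)}
    (hM : (G.addEdge a b).IsPerfectMatchingOn {x | x ≠ v ∧ x ≠ w}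
      (keptEdges {f₁, f₂, eav, ebw}) M) (hM_inr : Sum.inr () ∉ M) :
    G.IsPerfectMatchingOn univ univ (Sum.inl ⁻¹' M ∪ {f₁}) := by
  have hM_inl : M ⊆ range Sum.inl := by
    rintro (e | ⟨⟩) he
    exacts [mem_range_self e, (hM_inr he).elim]
  refine (hM.preimage Sum.inl_injective (fun _ => rfl) hM_inl).union_singleton
    (fun e he => hD.not_mem_ends ?_) hD.ends_f₁ hD.ne
  simpa using hM.1 he

theorem linkedOn_univ : G.LinkedOn univ a b :=
  (LinkedOn.single (mem_univ _) hD.ends_eav).trans <|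
    (LinkedOn.single (mem_univ _) hD.ends_f₁).trans <|
      LinkedOn.single (mem_univ _) (hD.ends_ebw.trans Sym2.eq_swap)

theorem linkedOn_keptEdges_diff {π : V → V} (hπ : ∀ z, z ≠ v → z ≠ w → π z = z)
    {f : E ⊕ Unit} {e : E} (he : e ∉ ({f₁, f₂, eav, ebw} : Set E)) (hef : Sum.inl e ≠ f)
    {p q : V} (hends : G.ends e = s(p, q)) :
    (G.addEdge a b).LinkedOn (keptEdges {f₁, f₂, eav, ebw} \ {f}) (π p) (π q) := by
  have hpq := hD.not_mem_ends he
  simp only [hends, Sym2.mem_iff, not_or] at hpq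
  rw [hπ p (Ne.symm hpq.1.1) (Ne.symm hpq.2.1), hπ q (Ne.symm hpq.1.2) (Ne.symm hpq.2.2)]
  exact LinkedOn.single ⟨inl_mem_keptEdges.mpr he, hef⟩ hends

theorem linkedOn_diff_inr {x y : V} (hx : x ≠ v ∧ x ≠ w) (hy : y ≠ v ∧ y ≠ w)
    (h : G.LinkedOn (univ \ {eav}) x y) :
    (G.addEdge a b).LinkedOn (keptEdges {f₁, f₂, eav, ebw} \ {Sum.inr ()}) x y := by
  classical
  let π z := if z = v ∨ z = w then b else z
  have hπ : ∀ z, z ≠ v → z ≠ w → π z = z := fun z hv hw => if_neg (not_or.mpr ⟨hv, hw⟩)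
  have hπv : π v = b := if_pos (Or.inl rfl)
  have hπw : π w = b := if_pos (Or.inr rfl)
  have hπb : π b = b := hπ b hD.b_ne_v hD.b_ne_w
  rw [← hπ x hx.1 hx.2, ← hπ y hy.1 hy.2]
  refine h.map π fun e he p q hends => ?_
  by_cases hK : e ∈ ({f₁, f₂, eav, ebw} : Set E)
  · rcases hK with rfl | rfl | rfl | rfl
    · exact (LinkedOn.of_eq (hπv.trans hπw.symm)).of_mk_eq_mk π
        (hends.symm.trans hD.ends_f₁)
    · exact (LinkedOn.of_eq (hπv.trans hπw.symm)).of_mk_eq_mk π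
        (hends.symm.trans hD.ends_f₂)
    · exact (he.2 rfl).elim
    · exact (LinkedOn.of_eq (hπb.trans hπw.symm)).of_mk_eq_mk π
        (hends.symm.trans hD.ends_ebw)
  · exact hD.linkedOn_keptEdges_diff hπ hK Sum.inl_ne_inr hends

theorem linkedOn_diff_inl {x y : V} (hx : x ≠ v ∧ x ≠ w) (hy : y ≠ v ∧ y ≠ w) {e₀ : E}
    (he₀ : e₀ ∉ ({f₁, f₂, eav, ebw} : Set E)) (h : G.LinkedOn (univ \ {e₀}) x y) :
    (G.addEdge a b).LinkedOn (keptEdges {f₁, f₂, eav, ebw} \ {Sum.inl e₀}) x y := by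
  classical
  let π z := if z = v then a else if z = w then b else z
  have hπ : ∀ z, z ≠ v → z ≠ w → π z = z := fun z hv hw => (if_neg hv).trans (if_neg hw)
  have hπv : π v = a := if_pos rfl
  have hπw : π w = b := (if_neg hD.ne.symm).trans (if_pos rfl)
  have hπa : π a = a := hπ a hD.a_ne_v hD.a_ne_w
  have hπb : π b = b := hπ b hD.b_ne_v hD.b_ne_w
  have hab :
      (G.addEdge a b).LinkedOn (keptEdges {f₁, f₂, eav, ebw} \ {Sum.inl e₀}) (π v) (π w) :=
    LinkedOn.single (e := Sum.inr ()) ⟨inr_mem_keptEdges (), Sum.inr_ne_inl⟩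
      (by rw [hπv, hπw]; rfl)
  rw [← hπ x hx.1 hx.2, ← hπ y hy.1 hy.2]
  refine h.map π fun e he p q hends => ?_
  by_cases hK : e ∈ ({f₁, f₂, eav, ebw} : Set E)
  · rcases hK with rfl | rfl | rfl | rfl
    · exact hab.of_mk_eq_mk π (hends.symm.trans hD.ends_f₁)
    · exact hab.of_mk_eq_mk π (hends.symm.trans hD.ends_f₂)
    · exact (LinkedOn.of_eq (hπa.trans hπv.symm)).of_mk_eq_mk π
        (hends.symm.trans hD.ends_eav)
    · exact (LinkedOn.of_eq (hπb.trans hπw.symm)).of_mk_eq_mk π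
        (hends.symm.trans hD.ends_ebw)
  · exact hD.linkedOn_keptEdges_diff hπ hK (fun h => he.2 (Sum.inl_injective h)) hends

theorem bridgelessOn (hG : G.BridgelessOn univ univ) :
    (G.addEdge a b).BridgelessOn {x | x ≠ v ∧ x ≠ w} (keptEdges {f₁, f₂, eav, ebw}) := by
  rintro f ⟨hf, x, hx, y, hy, hxy, hxy_diff⟩
  have hG_diff := hG.linkedOn_diff (mem_univ x) (mem_univ y)
    (linkedOn_univ_of_addEdge hD.linkedOn_univ hxy)
  rcases f with e₀ | ⟨⟩
  · exact hxy_diff (hD.linkedOn_diff_inl hx hy (inl_mem_keptEdges.mp hf) (hG_diff e₀))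
  · exact hxy_diff (hD.linkedOn_diff_inr hx hy (hG_diff eav))

end IsDoubleEdge

end Multigraph

theorem type_II_reduction_general {V E : Type} [Fintype E]
    (G : Multigraph V E)
    (hcubic : G.CubicOn Set.univ Set.univ)
    (v w a b : V) (f1 f2 eav ebw : E)
    (hvw : v ≠ w) (hf12 : f1 ≠ f2)
    (hf1 : G.ends f1 = s(v, w)) (hf2 : G.ends f2 = s(v, w))
    (heav : G.ends eav = s(a, v)) (hebw : G.ends ebw = s(b, w))
    (haw : a ≠ w) (hbv : b ≠ v)
    (H : Multigraph V (E ⊕ Unit))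
    (hH : H = ⟨Sum.elim G.ends (fun _ => s(a, b))⟩)
    (VS : Set V) (hVS : VS = {x | x ≠ v ∧ x ≠ w})
    (ES : Set (E ⊕ Unit))
    (hES : ES = Sum.inl '' {e | e ∉ ({f1, f2, eav, ebw} : Set E)} ∪ Set.range Sum.inr) :
    (∀ M' : Set (E ⊕ Unit), H.IsPerfectMatchingOn VS ES M' → Sum.inr () ∉ M' →
      G.IsPerfectMatchingOn Set.univ Set.univ ({e : E | Sum.inl e ∈ M'} ∪ {f1})) ∧
    (G.BridgelessOn Set.univ Set.univ → H.BridgelessOn VS ES) := by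
  subst hH hVS hES
  have hD : G.IsDoubleEdge v w a b f1 f2 eav ebw :=
    Multigraph.isDoubleEdge_of_degOn_eq_three (hcubic.2 v (mem_univ v))
      (hcubic.2 w (mem_univ w)) hvw hf12 hf1 hf2 heav hebw haw hbv
  exact ⟨fun M' hM' hM'_inr => hD.isPerfectMatchingOn_union hM' hM'_inr, hD.bridgelessOn⟩

/-- The type-II reduction and its reversal. Let `G` be a cubic multigraph with
a double edge `f1, f2` between `v` and `w`, and remaining incident edges
`{a,v}` and `{b,w}` with `a ≠ w`, `b ≠ v`. Let `H` be obtained from `G` by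
deleting `v` and `w` with all four incident edges and adding a new edge
`{a,b}`. If `M'` is a perfect matching of `H` with `{a,b} ∉ M'`, then
`M' ∪ {f1}` is a perfect matching of `G`. Moreover, if `G` is bridgeless then
so is `H`. -/
theorem type_II_reduction {V E : Type} [Fintype V] [Fintype E]
    (G : Multigraph V E)
    (hcubic : G.CubicOn Set.univ Set.univ)
    (v w a b : V) (f1 f2 eav ebw : E)
    (hvw : v ≠ w) (hf12 : f1 ≠ f2)
    (hf1 : G.ends f1 = s(v, w)) (hf2 : G.ends f2 = s(v, w))
    (heav : G.ends eav = s(a, v)) (hebw : G.ends ebw = s(b, w))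
    (haw : a ≠ w) (hbv : b ≠ v)
    (H : Multigraph V (E ⊕ Unit))
    (hH : H = ⟨Sum.elim G.ends (fun _ => s(a, b))⟩)
    (VS : Set V) (hVS : VS = {x | x ≠ v ∧ x ≠ w})
    (ES : Set (E ⊕ Unit))
    (hES : ES = Sum.inl '' {e | e ∉ ({f1, f2, eav, ebw} : Set E)} ∪ Set.range Sum.inr) :
    (∀ M' : Set (E ⊕ Unit), H.IsPerfectMatchingOn VS ES M' → Sum.inr () ∉ M' →
      G.IsPerfectMatchingOn Set.univ Set.univ ({e : E | Sum.inl e ∈ M'} ∪ {f1})) ∧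
    (G.BridgelessOn Set.univ Set.univ → H.BridgelessOn VS ES) :=
  type_II_reduction_general G hcubic v w a b f1 f2 eav ebw hvw hf12 hf1 hf2 heav hebw haw hbv H hH
    VS hVS ES hES
end
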